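/- Let W be a real d×m matrix with WᵀW positive definite, let r > 0, set c = tr((WᵀW)^{r/(r+1)}), and define Ω* = (WᵀW)^{1/(r+1)} / c^{1/r}. Then Ω* is symmetric positive definite, tr((Ω*)^r) = 1, and tr((Ω*)⁻¹ WᵀW) = c^{(r+1)/r}, so Ω* attains the infimum of tr(Ω⁻¹WᵀW) over symmetric positive definite Ω with tr(Ω^r) ≤ 1. -/

import Mathlib

open Matrix

/-- `Wᵀ * W` is Hermitian (symmetric) for a real matrix `W`. -/
lemma isHermitian_transpose_mul {d m : ℕ} (W : Matrix (Fin d) (Fin m) ℝ) :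
    (Wᵀ * W).IsHermitian := by
  simpa using W.isHermitian_conjTranspose_mul_self

/-- The singular values of a real `d × m` matrix `W`: the square roots of the
eigenvalues of the symmetric positive semidefinite matrix `Wᵀ * W`. -/
noncomputable def singVal {d m : ℕ} (W : Matrix (Fin d) (Fin m) ℝ) (i : Fin m) : ℝ :=
  Real.sqrt ((isHermitian_transpose_mul W).eigenvalues i)

/-- The real power `A ^ p` of a (symmetric) matrix, defined through the spectral
decomposition, i.e. by applying `t ↦ t ^ p` to the eigenvalues (continuous functional
calculus). -/
noncomputable def mpow {m : ℕ} (A : Matrix (Fin m) (Fin m) ℝ) (p : ℝ) :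
    Matrix (Fin m) (Fin m) ℝ :=
  cfc (fun t : ℝ => t ^ p) A

/-! Diagonalize `Ω = U diag(ω) Uᵀ` and put `a = diag(Uᵀ A U)`, so that `tr(Ω⁻¹ A) = ∑ aᵢ / ωᵢ`.
The squared entries of the orthogonal matrix relating the eigenbases of `Ω` and `A` form a doubly
stochastic matrix carrying the eigenvalues `λ` of `A` to `a`, so concavity of `t ↦ t ^ p`,
`p = r / (r + 1)`, gives `tr(A ^ p) = ∑ λⱼ ^ p ≤ ∑ aᵢ ^ p`. Hölder's inequality for
`aᵢ = (aᵢ / ωᵢ) ωᵢ` with exponents `1` and `r` then bounds `∑ aᵢ ^ p` by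
`tr(Ω⁻¹ A) ^ p tr(Ω ^ r) ^ (1 / (r + 1))`. For `Ω*`, a function of `A`, both sides are computed
on the eigenvalues of `A` and the bound is attained. -/

open Finset

open scoped MatrixOrder

theorem ConcaveOn.sum_le_sum_mulVec_of_mem_doublyStochastic {𝕜 n : Type*} [Field 𝕜]
    [LinearOrder 𝕜] [IsStrictOrderedRing 𝕜] [Fintype n] [DecidableEq n] {f : 𝕜 → 𝕜}
    {s : Set 𝕜} (hf : ConcaveOn 𝕜 s f) {S : Matrix n n 𝕜} (hS : S ∈ doublyStochastic 𝕜 n)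
    {x : n → 𝕜} (hx : ∀ j, x j ∈ s) :
    ∑ j, f (x j) ≤ ∑ i, f ((S *ᵥ x) i) :=
  calc ∑ j, f (x j) = ∑ i, ∑ j, S i j * f (x j) := by
        rw [sum_comm]
        simp [← sum_mul, sum_col_of_mem_doublyStochastic hS]
    _ ≤ ∑ i, f ((S *ᵥ x) i) := sum_le_sum fun i _ =>
        hf.le_map_sum (fun j _ => nonneg_of_mem_doublyStochastic hS)
          (sum_row_of_mem_doublyStochastic hS i) (fun j _ => hx j)

theorem Real.sum_rpow_le_sum_div_rpow_mul_sum_rpow {ι : Type*} (s : Finset ι) {a ω : ι → ℝ}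
    (ha : ∀ i ∈ s, 0 ≤ a i) (hω : ∀ i ∈ s, 0 < ω i) {r : ℝ} (hr : 0 < r) :
    ∑ i ∈ s, a i ^ (r / (r + 1)) ≤
      (∑ i ∈ s, a i / ω i) ^ (r / (r + 1)) * (∑ i ∈ s, ω i ^ r) ^ (1 / (r + 1)) := by
  have hHolder : Real.HolderTriple 1 r (r / (r + 1)) :=
    ⟨by rw [inv_div, inv_one]; field_simp, one_pos, hr⟩
  convert Real.Lr_rpow_le_Lp_mul_Lq_of_nonneg s hHolder
    (fun i hi => div_nonneg (ha i hi) (hω i hi).le) (fun i hi => (hω i hi).le) using 3 with i hi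
  · exact (div_mul_cancel₀ _ (hω i hi).ne').symm
  · simp
  · simp
  · field_simp

namespace Matrix

section Spectral

variable {n : Type*} [Fintype n] [DecidableEq n]

lemma IsHermitian.trace_cfc {A : Matrix n n ℝ} (hA : A.IsHermitian) (f : ℝ → ℝ) :
    (cfc f A).trace = ∑ i, f (hA.eigenvalues i) := by
  rw [hA.cfc_eq, IsHermitian.cfc, Unitary.conjStarAlgAut_apply, trace_mul_cycle,
    Unitary.coe_star_mul_self, one_mul, trace_diagonal]
  rfl

lemma IsHermitian.trace_cfc_mul {A : Matrix n n ℝ} (hA : A.IsHermitian) (f : ℝ → ℝ)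
    (B : Matrix n n ℝ) :
    (cfc f A * B).trace = ∑ i, f (hA.eigenvalues i) *
      (star (hA.eigenvectorUnitary : Matrix n n ℝ) * B * hA.eigenvectorUnitary) i i := by
  rw [hA.cfc_eq, IsHermitian.cfc, Unitary.conjStarAlgAut_apply, mul_assoc, mul_assoc,
    trace_mul_comm, mul_assoc]
  simp [trace, diagonal_mul]

lemma PosDef.trace_inv_mul {Ω : Matrix n n ℝ} (hΩ : Ω.PosDef) (A : Matrix n n ℝ) :
    (Ω⁻¹ * A).trace = ∑ i,
      (star (hΩ.isHermitian.eigenvectorUnitary : Matrix n n ℝ) * A *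
        hΩ.isHermitian.eigenvectorUnitary) i i / hΩ.isHermitian.eigenvalues i := by
  rw [nonsing_inv_eq_ringInverse, ← cfc_ringInverse_id (R := ℝ) (a := Ω) hΩ.isUnit,
    hΩ.isHermitian.trace_cfc_mul]
  simp only [div_eq_inv_mul]

lemma map_sq_mem_doublyStochastic {M : Matrix n n ℝ} (hM : M ∈ unitaryGroup n ℝ) :
    M.map (· ^ 2) ∈ doublyStochastic ℝ n := by
  refine mem_doublyStochastic_iff_sum.mpr ⟨fun i j => sq_nonneg _, fun i => ?_, fun j => ?_⟩
  · simpa [mul_apply, sq] using congr_fun₂ (mem_unitaryGroup_iff.mp hM) i i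
  · simpa [mul_apply, sq] using congr_fun₂ (mem_unitaryGroup_iff'.mp hM) j j

lemma IsHermitian.diag_star_mul_mul_eq_mulVec {A : Matrix n n ℝ} (hA : A.IsHermitian)
    (U : Matrix n n ℝ) :
    (star U * A * U).diag =
      (star U * hA.eigenvectorUnitary).map (· ^ 2) *ᵥ hA.eigenvalues := by
  set N := star U * (hA.eigenvectorUnitary : Matrix n n ℝ)
  have hconj : star U * A * U = N * diagonal hA.eigenvalues * star N := by
    conv_lhs => rw [hA.spectral_theorem]
    simp [N, Unitary.conjStarAlgAut_apply, star_mul, mul_assoc]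
  ext i
  rw [hconj, diag_apply, mul_apply]
  simp only [mul_diagonal, star_apply, star_trivial, mulVec, dotProduct, map_apply]
  exact sum_congr rfl fun j _ => by ring

lemma IsHermitian.trace_cfc_le_sum_diag {A : Matrix n n ℝ} (hA : A.IsHermitian) {f : ℝ → ℝ}
    {s : Set ℝ} (hf : ConcaveOn ℝ s f) (hs : ∀ i, hA.eigenvalues i ∈ s) {U : Matrix n n ℝ}
    (hU : U ∈ unitaryGroup n ℝ) :
    (cfc f A).trace ≤ ∑ i, f ((star U * A * U) i i) := by
  rw [hA.trace_cfc]
  refine (hf.sum_le_sum_mulVec_of_mem_doublyStochastic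
    (map_sq_mem_doublyStochastic (mul_mem (Unitary.star_mem hU) hA.eigenvectorUnitary.2))
    hs).trans_eq ?_
  rw [← hA.diag_star_mul_mul_eq_mulVec]
  rfl

end Spectral

section Power

variable {m : ℕ} {A : Matrix (Fin m) (Fin m) ℝ}

lemma trace_mpow (hA : A.IsHermitian) (p : ℝ) :
    (mpow A p).trace = ∑ i, hA.eigenvalues i ^ p :=
  hA.trace_cfc _

lemma posDef_mpow (hA : A.PosDef) (p : ℝ) : (mpow A p).PosDef := by
  rw [← isStrictlyPositive_iff_posDef, _root_.mpow,
    cfc_isStrictlyPositive_iff _ _ (A.finite_real_spectrum.continuousOn _)]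
  exact fun x hx => Real.rpow_pos_of_pos (hA.isStrictlyPositive.spectrum_pos hx) p

lemma mpow_mpow (hA : A.PosSemidef) (p q : ℝ) : mpow (mpow A p) q = mpow A (p * q) := by
  rw [_root_.mpow, _root_.mpow, _root_.mpow, ← cfc_comp' (fun t => t ^ q) (fun t => t ^ p) A
    ((A.finite_real_spectrum.image _).continuousOn _) (A.finite_real_spectrum.continuousOn _)]
  exact cfc_congr fun x hx => (Real.rpow_mul (spectrum_nonneg_of_nonneg hA.nonneg hx) p q).symm

lemma mpow_smul (hA : A.PosSemidef) {k : ℝ} (hk : 0 ≤ k) (p : ℝ) :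
    mpow (k • A) p = k ^ p • mpow A p := by
  rw [_root_.mpow, _root_.mpow,
    ← cfc_comp_smul k _ A ((A.finite_real_spectrum.image _).continuousOn _),
    ← cfc_const_mul _ _ A (A.finite_real_spectrum.continuousOn _)]
  exact cfc_congr fun x hx => Real.mul_rpow hk (spectrum_nonneg_of_nonneg hA.nonneg hx)

lemma PosDef.inv_mpow (hA : A.PosDef) (p : ℝ) : (mpow A p)⁻¹ = mpow A (-p) := by
  have hpos {x : ℝ} (hx : x ∈ spectrum ℝ A) : 0 < x := hA.isStrictlyPositive.spectrum_pos hx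
  rw [nonsing_inv_eq_ringInverse, _root_.mpow, ← cfc_inv _ A
    (fun x hx => (Real.rpow_pos_of_pos (hpos hx) p).ne') (A.finite_real_spectrum.continuousOn _)]
  exact cfc_congr fun x hx => (Real.rpow_neg (hpos hx).le p).symm

lemma PosDef.inv_smul_mpow (hA : A.PosDef) {k : ℝ} (hk : k ≠ 0) (p : ℝ) :
    (k • mpow A p)⁻¹ = k⁻¹ • mpow A (-p) := by
  rw [← hA.inv_mpow, ← Units.val_mk0 hk, ← Units.smul_def,
    inv_smul' _ _ ((isUnit_iff_isUnit_det _).mp (posDef_mpow hA p).isUnit), Units.smul_def,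
    Units.val_inv_eq_inv_val]

lemma PosDef.mpow_mul_self (hA : A.PosDef) (p : ℝ) : mpow A p * A = mpow A (p + 1) := by
  rw [_root_.mpow, _root_.mpow]
  nth_rw 2 [← cfc_id' ℝ A]
  rw [← cfc_mul _ _ A (A.finite_real_spectrum.continuousOn _)]
  exact cfc_congr fun x hx =>
    (Real.rpow_add_one (hA.isStrictlyPositive.spectrum_pos hx).ne' p).symm

theorem trace_mpow_rpow_le_trace_inv_mul (hA : A.PosSemidef) {Ω : Matrix (Fin m) (Fin m) ℝ}
    (hΩ : Ω.PosDef) {r : ℝ} (hr : 0 < r) (hΩr : (mpow Ω r).trace ≤ 1) :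
    (mpow A (r / (r + 1))).trace ^ ((r + 1) / r) ≤ (Ω⁻¹ * A).trace := by
  set U : Matrix (Fin m) (Fin m) ℝ := hΩ.isHermitian.eigenvectorUnitary.1
  set ω := hΩ.isHermitian.eigenvalues
  set a := (star U * A * U).diag
  have hω : ∀ i, 0 < ω i := hΩ.eigenvalues_pos
  have ha : ∀ i, 0 ≤ a i := fun i => (hA.conjTranspose_mul_mul_same U).diag_nonneg
  have hT0 : 0 ≤ ∑ i, a i / ω i := sum_nonneg fun i _ => div_nonneg (ha i) (hω i).le
  have hΩr' : (∑ i, ω i ^ r) ^ (1 / (r + 1)) ≤ 1 := by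
    rw [trace_mpow hΩ.isHermitian] at hΩr
    exact Real.rpow_le_one (sum_nonneg fun i _ => Real.rpow_nonneg (hω i).le _) hΩr
      (by positivity)
  have hconcave : (mpow A (r / (r + 1))).trace ≤ ∑ i, a i ^ (r / (r + 1)) :=
    hA.isHermitian.trace_cfc_le_sum_diag (Real.concaveOn_rpow (by positivity)
      (div_le_one_of_le₀ (by linarith) (by linarith))) hA.eigenvalues_nonneg
      hΩ.isHermitian.eigenvectorUnitary.2
  have hHolder := Real.sum_rpow_le_sum_div_rpow_mul_sum_rpow univ (fun i _ => ha i)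
    (fun i _ => hω i) hr
  have hc0 : 0 ≤ (mpow A (r / (r + 1))).trace := by
    rw [trace_mpow hA.isHermitian]
    exact sum_nonneg fun i _ => Real.rpow_nonneg (hA.eigenvalues_nonneg i) _
  calc (mpow A (r / (r + 1))).trace ^ ((r + 1) / r)
      ≤ ((∑ i, a i / ω i) ^ (r / (r + 1))) ^ ((r + 1) / r) := by
        refine Real.rpow_le_rpow hc0 ((hconcave.trans hHolder).trans ?_) (by positivity)
        exact mul_le_of_le_one_right (Real.rpow_nonneg hT0 _) hΩr'
    _ = (Ω⁻¹ * A).trace := by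
        rw [← Real.rpow_mul hT0, show r / (r + 1) * ((r + 1) / r) = 1 by field_simp,
          Real.rpow_one]
        exact (hΩ.trace_inv_mul A).symm

end Power

end Matrix

/-- with c = tr((WᵀW)^{r/(r+1)}) and Ω* = (WᵀW)^{1/(r+1)} / c^{1/r},
Ω* is symmetric positive definite, tr((Ω*)^r) = 1, tr((Ω*)⁻¹ WᵀW) = c^{(r+1)/r}, and
Ω* attains the infimum of tr(Ω⁻¹WᵀW) over symmetric positive definite Ω with
tr(Ω^r) ≤ 1. -/
theorem stmt16 {d m : ℕ} (hm : 0 < m) (W : Matrix (Fin d) (Fin m) ℝ)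
    (hW : (Wᵀ * W).PosDef) (r : ℝ) (hr : 0 < r)
    (c : ℝ) (hc : c = (mpow (Wᵀ * W) (r / (r + 1))).trace)
    (Ωstar : Matrix (Fin m) (Fin m) ℝ)
    (hΩstar : Ωstar = (c ^ (1 / r))⁻¹ • mpow (Wᵀ * W) (1 / (r + 1))) :
    Ωstar.PosDef ∧ (mpow Ωstar r).trace = 1 ∧
    (Ωstar⁻¹ * (Wᵀ * W)).trace = c ^ ((r + 1) / r) ∧
    ∀ Ω : Matrix (Fin m) (Fin m) ℝ, Ω.PosDef → (mpow Ω r).trace ≤ 1 →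
      (Ωstar⁻¹ * (Wᵀ * W)).trace ≤ (Ω⁻¹ * (Wᵀ * W)).trace := by
  have : Nonempty (Fin m) := ⟨⟨0, hm⟩⟩
  have hc0 : 0 < c := hc ▸ (posDef_mpow hW _).trace_pos
  have hk : 0 < c ^ (1 / r) := by positivity
  have hval : (Ωstar⁻¹ * (Wᵀ * W)).trace = c ^ ((r + 1) / r) := by
    rw [hΩstar, hW.inv_smul_mpow (inv_pos.mpr hk).ne', inv_inv, smul_mul_assoc,
      hW.mpow_mul_self, trace_smul, smul_eq_mul,
      show -(1 / (r + 1)) + 1 = r / (r + 1) by field_simp; ring, ← hc,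
      ← Real.rpow_add_one hc0.ne', show 1 / r + 1 = (r + 1) / r by field_simp; ring]
  refine ⟨hΩstar ▸ (posDef_mpow hW _).smul (inv_pos.mpr hk), ?_, hval, fun Ω hΩ hΩr => ?_⟩
  · rw [hΩstar, mpow_smul (posDef_mpow hW _).posSemidef (inv_pos.mpr hk).le,
      mpow_mpow hW.posSemidef, trace_smul, smul_eq_mul, show 1 / (r + 1) * r = r / (r + 1) by field_simp, ← hc,
      Real.inv_rpow hk.le, one_div, Real.rpow_inv_rpow hc0.le hr.ne', inv_mul_cancel₀ hc0.ne']
  · rw [hval, hc]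
    exact trace_mpow_rpow_le_trace_inv_mul hW.posSemidef hΩ hr hΩr
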